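/- Let b > 0 and c > 0 be real, let A ∈ ℂ with Re A ≤ 0, and let ε ∈ {+1, −1}. Then Re[½(A − c + ε·√((A + c)² − 4b))] < 0, where √ is the principal square root. -/

import Mathlib

/-!
Only `w ^ 2 = (A + c) ^ 2 - 4 b` matters, not which square root `w` is. With `u = A + c`,
`(w + u) (w - u) = -4b` is a negative real. If `Re (A - c + w) ≥ 0`, then `Re (w + u) ≥ 2c > 0`
and `Re (w - u) ≥ -2 Re A ≥ 0`. But a product of a number with positive real part and one with
nonnegative real part is never a negative real.
-/

/-- The principal square root on `ℂ`: the square root with nonnegative real part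
(and nonnegative imaginary part when the real part is zero). -/
noncomputable def csqrt (z : ℂ) : ℂ := z ^ (1 / 2 : ℂ)

lemma csqrt_sq (z : ℂ) : csqrt z ^ 2 = z := by
  simp [csqrt]

namespace Complex

lemma re_mul_nonneg_of_im_mul_eq_zero {α β : ℂ} (hα : 0 < α.re) (hβ : 0 ≤ β.re)
    (him : (α * β).im = 0) : 0 ≤ (α * β).re := by
  rw [mul_im] at him
  rw [mul_re]
  have hscaled : α.re * (α.re * β.re - α.im * β.im) = β.re * (α.re ^ 2 + α.im ^ 2) := by
    linear_combination (-α.im) * him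
  exact nonneg_of_mul_nonneg_right (hscaled ▸ by positivity) hα

lemma re_sub_add_neg_of_sq_eq {A w : ℂ} {c d : ℝ} (hc : 0 < c) (hd : 0 < d) (hA : A.re ≤ 0)
    (hw : w ^ 2 = (A + c) ^ 2 - d) : (A - c + w).re < 0 := by
  by_contra! h
  simp only [add_re, sub_re, ofReal_re] at h
  have hplus : 0 < (w + (A + c)).re := by simp only [add_re, ofReal_re]; linarith
  have hminus : 0 ≤ (w - (A + c)).re := by simp only [sub_re, add_re, ofReal_re]; linarith
  have hprod : (w + (A + c)) * (w - (A + c)) = -d := by linear_combination hw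
  have hnonneg := re_mul_nonneg_of_im_mul_eq_zero hplus hminus (by simp [hprod])
  rw [hprod, neg_re, ofReal_re] at hnonneg
  linarith

end Complex

/-- For `b, c > 0`, `Re A ≤ 0` and `ε = ±1`:
`Re[½(A − c + ε√((A+c)² − 4b))] < 0`. -/
theorem stmt17 (b c : ℝ) (hb : 0 < b) (hc : 0 < c) (A : ℂ) (hA : A.re ≤ 0)
    (ε : ℂ) (hε : ε = 1 ∨ ε = -1) :
    ((A - (c : ℂ) + ε * csqrt ((A + (c : ℂ)) ^ 2 - 4 * (b : ℂ))) / 2).re < 0 := by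
  have hε2 : ε ^ 2 = 1 := by rcases hε with rfl | rfl <;> norm_num
  have hsq : (ε * csqrt ((A + c) ^ 2 - 4 * b)) ^ 2 = (A + c) ^ 2 - ((4 * b : ℝ) : ℂ) := by
    rw [mul_pow, hε2, one_mul, csqrt_sq]; push_cast; ring
  rw [Complex.div_ofNat_re]
  linarith [Complex.re_sub_add_neg_of_sq_eq hc (by positivity) hA hsq]
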